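/- Let q: B'_n → G be a quotient (n ≥ 8) and let R ≅ B'_{n−3} be the commutator subgroup of the braid group on the rightmost n−3 strands. If Z denotes the intersection of q(R) with the cyclic subgroup generated by q(σ_2σ_1^{-1}), then q(R)/Z is a nontrivial quotient of B'_{n−3}, provided n−3 ≥ 5. -/

import Mathlib

/-- Relators of the Artin presentation of the braid group on `n` strands.
Generator `i : Fin (n-1)` corresponds to the Artin generator `σ_{i+1}`. -/
def braidRels (n : ℕ) : Set (FreeGroup (Fin (n - 1))) :=
  {r | (∃ i j : Fin (n - 1), (i : ℕ) + 1 = (j : ℕ) ∧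
          r = .of i * .of j * .of i * (.of j * .of i * .of j)⁻¹) ∨
       (∃ i j : Fin (n - 1), (i : ℕ) + 2 ≤ (j : ℕ) ∧
          r = .of i * .of j * (.of j * .of i)⁻¹)}

/-- The braid group on `n` strands. -/
def BraidGroup (n : ℕ) : Type := PresentedGroup (braidRels n)

instance (n : ℕ) : Group (BraidGroup n) := by unfold BraidGroup; infer_instance

/-- `sig n i` is the Artin generator `σ_i` (1-based: `1 ≤ i ≤ n-1`), and `1` otherwise. -/
def sig (n : ℕ) (i : ℕ) : BraidGroup n :=
  if h : 1 ≤ i ∧ i ≤ n - 1 then PresentedGroup.of ⟨i - 1, by omega⟩ else 1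

/-- The exponent sum homomorphism `B_n → ℤ`, sending each Artin generator to `1`. -/
def expSum (n : ℕ) : BraidGroup n →* Multiplicative ℤ :=
  PresentedGroup.toGroup (f := fun _ : Fin (n - 1) => Multiplicative.ofAdd (1 : ℤ))
    (by
      rintro r (⟨i, j, -, rfl⟩ | ⟨i, j, -, rfl⟩) <;>
        simp only [map_mul, map_inv, FreeGroup.lift_apply_of] <;> group)

/-- The Birman–Ko–Lee generator `ρ_{ij}`:
the half twist `(σ_{j-1} ⋯ σ_{i+1}) σ_i (σ_{j-1} ⋯ σ_{i+1})⁻¹`. -/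
def rho (n i j : ℕ) : BraidGroup n :=
  (((List.range' (i + 1) (j - 1 - i)).reverse.map (sig n)).prod) * sig n i *
    (((List.range' (i + 1) (j - 1 - i)).reverse.map (sig n)).prod)⁻¹

/-!
If `q(R)` lay inside the cyclic group generated by `q(σ₂σ₁⁻¹)`, then `q(R)` would be abelian; since
`R ≅ B'_{n-3}` is perfect (`n - 3 ≥ 5`), `q` would kill `R`, in particular `σ₅σ₄⁻¹`. But `B'_n` is
the normal closure in `B_n` of any `σ_{k+1}σ_k⁻¹`, and for `k ≥ 3` conjugation by `B_n` on
`σ_{k+1}σ_k⁻¹` may be replaced by conjugation by `B'_n` (correct by a power of `σ₁`, which commutes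
with it), so `q` would be trivial, contradicting `G ≠ 1`.
-/

open scoped commutatorElement

section GroupLemmas

variable {G H : Type*} [Group G] [Group H]

theorem eq_of_braid_of_commute {x y : G} (hb : x * y * x = y * x * y) (hc : Commute x y) :
    x = y := by
  rw [hc.eq] at hb
  exact mul_left_cancel hb

theorem eq_iff_eq_of_braid_of_commute {x y z : G} (hxy : x * y * x = y * x * y)
    (hyz : y * z * y = z * y * z) (hxz : Commute x z) : x = y ↔ y = z :=
  ⟨fun h => eq_of_braid_of_commute hyz (by rwa [← h]),
    fun h => eq_of_braid_of_commute hxy (by rwa [h])⟩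

theorem mem_commutator_of_eq_conj_mul_conj {K : Subgroup G} {g t : G} (hg : g ∈ K) (ht : t ∈ K)
    (h : (g⁻¹ * t * g) * (g * t * g⁻¹) = t) : t ∈ ⁅K, K⁆ := by
  have key : ⁅g⁻¹, t⁆ * t * ⁅g, t⁆ * t = t :=
    (by simp only [commutatorElement_def]; group : _ = (g⁻¹ * t * g) * (g * t * g⁻¹)).trans h
  have ht' : t = ⁅g⁻¹, t⁆⁻¹ * ⁅g, t⁆⁻¹ := calc
    t = ⁅g⁻¹, t⁆⁻¹ * (⁅g⁻¹, t⁆ * t * ⁅g, t⁆ * t) * t⁻¹ * ⁅g, t⁆⁻¹ := by group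
    _ = ⁅g⁻¹, t⁆⁻¹ * ⁅g, t⁆⁻¹ := by rw [key]; group
  rw [ht']
  exact mul_mem (inv_mem (Subgroup.commutator_mem_commutator (inv_mem hg) ht))
    (inv_mem (Subgroup.commutator_mem_commutator hg ht))

theorem mul_inv_mem_commutator_of_braid {K : Subgroup G} {a b c : G}
    (hab : a * b * a = b * a * b) (hac : Commute a c) (hbc : Commute b c)
    (hba : b * a⁻¹ ∈ K) (hca : a * c⁻¹ ∈ K) : b * a⁻¹ ∈ ⁅K, K⁆ := by
  refine mem_commutator_of_eq_conj_mul_conj hca hba ?_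
  -- `c` centralizes `a` and `b`, so conjugating by `a * c⁻¹` acts on `b * a⁻¹` as conjugating by `a`
  have hc₁ : Commute c (a⁻¹ * b) := (hac.inv_left.mul_left hbc).symm
  have hc₂ : Commute c⁻¹ (b * a⁻¹) := (hbc.mul_left hac.inv_left).symm.inv_left
  calc (a * c⁻¹)⁻¹ * (b * a⁻¹) * (a * c⁻¹) * ((a * c⁻¹) * (b * a⁻¹) * (a * c⁻¹)⁻¹)
      = c * (a⁻¹ * b) * c⁻¹ * (a * (c⁻¹ * (b * a⁻¹)) * c * a⁻¹) := by group
    _ = a⁻¹ * (b * a * b) * a⁻¹ * a⁻¹ := by rw [hc₁.eq, hc₂.eq]; group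
    _ = b * a⁻¹ := by rw [← hab]; group

theorem Group.IsPerfect.apply_eq_one_of_commute [Group.IsPerfect G] (f : G →* H)
    (hf : ∀ x y, Commute (f x) (f y)) (x : G) : f x = 1 := by
  have hle : commutator G ≤ f.ker := Subgroup.commutator_le.mpr fun p _ r _ => by
    rw [MonoidHom.mem_ker, map_commutatorElement, commutatorElement_eq_one_iff_commute]
    exact hf p r
  exact hle Group.IsPerfect.mem_commutator

end GroupLemmas

namespace BraidGroup

variable {m : ℕ} {H : Type*} [Group H]

theorem sig_eq_of {i : ℕ} (h₁ : 1 ≤ i) (h₂ : i ≤ m - 1) :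
    sig m i = PresentedGroup.of (rels := braidRels m) ⟨i - 1, by omega⟩ :=
  dif_pos ⟨h₁, h₂⟩

theorem of_eq_sig (i : Fin (m - 1)) :
    PresentedGroup.of (rels := braidRels m) i = sig m (i + 1) := by
  rw [sig_eq_of (by omega) i.isLt]
  rfl

theorem sig_braid {i : ℕ} (h₁ : 1 ≤ i) (h₂ : i + 1 ≤ m - 1) :
    sig m i * sig m (i + 1) * sig m i = sig m (i + 1) * sig m i * sig m (i + 1) := by
  rw [sig_eq_of h₁ (by omega), sig_eq_of (by omega) h₂]
  have h := PresentedGroup.one_of_mem (rels := braidRels m)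
    (Or.inl ⟨⟨i - 1, by omega⟩, ⟨i + 1 - 1, by omega⟩, by simp only; omega, rfl⟩)
  simp only [map_mul, map_inv, mul_inv_eq_one] at h
  exact h

theorem sig_commute {i j : ℕ} (h₁ : 1 ≤ i) (hij : i + 2 ≤ j) (h₂ : j ≤ m - 1) :
    Commute (sig m i) (sig m j) := by
  rw [sig_eq_of h₁ (by omega), sig_eq_of (by omega) h₂]
  have h := PresentedGroup.one_of_mem (rels := braidRels m)
    (Or.inr ⟨⟨i - 1, by omega⟩, ⟨j - 1, by omega⟩, by simp only; omega, rfl⟩)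
  simp only [map_mul, map_inv, mul_inv_eq_one] at h
  exact h

theorem expSum_sig {i : ℕ} (h₁ : 1 ≤ i) (h₂ : i ≤ m - 1) :
    expSum m (sig m i) = Multiplicative.ofAdd 1 := by
  rw [sig_eq_of h₁ h₂]
  exact PresentedGroup.toGroup.of _

theorem hom_ext_sig {f g : BraidGroup m →* H}
    (h : ∀ i, 1 ≤ i → i ≤ m - 1 → f (sig m i) = g (sig m i)) : f = g :=
  PresentedGroup.ext fun i => by rw [of_eq_sig]; exact h _ (by omega) i.isLt

theorem eq_zpowersHom_comp_expSum (f : BraidGroup m →* H)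
    (h : ∀ i, 1 ≤ i → i + 1 ≤ m - 1 → f (sig m i) = f (sig m (i + 1))) :
    f = (zpowersHom H (f (sig m 1))).comp (expSum m) := by
  have hsig : ∀ i, 1 ≤ i → i ≤ m - 1 → f (sig m i) = f (sig m 1) := by
    intro i h₁ h₂
    induction i, h₁ using Nat.le_induction with
    | base => rfl
    | succ i hi ih => exact (h i hi h₂).symm.trans (ih (by omega))
  refine hom_ext_sig fun i h₁ h₂ => ?_
  simp [expSum_sig h₁ h₂, hsig i h₁ h₂]

theorem ker_expSum : (expSum m).ker = commutator (BraidGroup m) := by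
  refine le_antisymm (fun x hx => ?_) (Abelianization.commutator_subset_ker _)
  have hab := eq_zpowersHom_comp_expSum (m := m) Abelianization.of fun i h₁ h₂ => by
    refine eq_of_braid_of_commute ?_ (Commute.all _ _)
    simpa only [map_mul] using congrArg Abelianization.of (sig_braid h₁ h₂)
  rw [← Abelianization.ker_of, MonoidHom.mem_ker, hab, MonoidHom.comp_apply,
    MonoidHom.mem_ker.mp hx, map_one]

theorem sig_mul_inv_sig_mem_commutator {i j : ℕ} (hi₁ : 1 ≤ i) (hi₂ : i ≤ m - 1)
    (hj₁ : 1 ≤ j) (hj₂ : j ≤ m - 1) : sig m i * (sig m j)⁻¹ ∈ commutator (BraidGroup m) := by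
  rw [← ker_expSum, MonoidHom.mem_ker, map_mul, map_inv, expSum_sig hi₁ hi₂, expSum_sig hj₁ hj₂,
    mul_inv_cancel]

theorem map_sig_eq_map_sig_succ_of_eq {f : BraidGroup m →* H} {k : ℕ} (hk : 1 ≤ k)
    (hkm : k + 1 ≤ m - 1) (h : f (sig m k) = f (sig m (k + 1))) :
    ∀ i, 1 ≤ i → i + 1 ≤ m - 1 → f (sig m i) = f (sig m (i + 1)) := by
  have step : ∀ i, 1 ≤ i → i + 2 ≤ m - 1 →
      (f (sig m i) = f (sig m (i + 1)) ↔ f (sig m (i + 1)) = f (sig m (i + 1 + 1))) :=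
    fun i h₁ h₂ => eq_iff_eq_of_braid_of_commute
      (by simpa only [map_mul] using congrArg f (sig_braid h₁ (by omega)))
      (by simpa only [map_mul] using congrArg f (sig_braid (by omega) h₂))
      ((sig_commute h₁ le_rfl h₂).map f)
  have iff_one : ∀ i, 1 ≤ i → i + 1 ≤ m - 1 →
      (f (sig m i) = f (sig m (i + 1)) ↔ f (sig m 1) = f (sig m (1 + 1))) := by
    intro i h₁ h₂
    induction i, h₁ using Nat.le_induction with
    | base => rfl
    | succ i hi ih => exact (step i hi h₂).symm.trans (ih (by omega))
  exact fun i h₁ h₂ => (iff_one i h₁ h₂).mpr ((iff_one k hk hkm).mp h)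

theorem commutator_le_normalClosure {k : ℕ} (hk : 1 ≤ k) (hkm : k + 1 ≤ m - 1) :
    commutator (BraidGroup m) ≤ Subgroup.normalClosure {sig m (k + 1) * (sig m k)⁻¹} := by
  set N := Subgroup.normalClosure {sig m (k + 1) * (sig m k)⁻¹}
  have hk' : QuotientGroup.mk' N (sig m k) = QuotientGroup.mk' N (sig m (k + 1)) := by
    have h : QuotientGroup.mk' N (sig m (k + 1) * (sig m k)⁻¹) = 1 :=
      (QuotientGroup.eq_one_iff _).mpr (Subgroup.subset_normalClosure rfl)
    rw [map_mul, map_inv, mul_inv_eq_one] at h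
    exact h.symm
  intro x hx
  rw [← ker_expSum, MonoidHom.mem_ker] at hx
  rw [← QuotientGroup.ker_mk' N, MonoidHom.mem_ker,
    eq_zpowersHom_comp_expSum _ (map_sig_eq_map_sig_succ_of_eq hk hkm hk'),
    MonoidHom.comp_apply, hx, map_one]

theorem isPerfect_commutator (hm : 5 ≤ m) : Group.IsPerfect (commutator (BraidGroup m)) := by
  rw [Subgroup.isPerfect_iff]
  refine le_antisymm (Subgroup.commutator_le_self _)
    ((commutator_le_normalClosure le_rfl (by omega)).trans
      (Subgroup.normalClosure_le_normal (Set.singleton_subset_iff.mpr ?_)))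
  exact mul_inv_mem_commutator_of_braid (sig_braid le_rfl (by omega))
    (sig_commute le_rfl (by omega) (by omega)) (sig_commute (by omega) le_rfl (by omega))
    (sig_mul_inv_sig_mem_commutator (by omega) (by omega) le_rfl (by omega))
    (sig_mul_inv_sig_mem_commutator le_rfl (by omega) (j := 4) (by omega) (by omega))

theorem exists_mem_commutator_conj_eq {j : ℕ} (hj₁ : 1 ≤ j) (hj₂ : j ≤ m - 1)
    {t : BraidGroup m} (ht : Commute (sig m j) t) (c : BraidGroup m) :
    ∃ c' ∈ commutator (BraidGroup m), c' * t * c'⁻¹ = c * t * c⁻¹ := by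
  set e := Multiplicative.toAdd (expSum m c)
  refine ⟨c * sig m j ^ (-e), ?_, ?_⟩
  · rw [← ker_expSum, MonoidHom.mem_ker, map_mul, map_zpow, expSum_sig hj₁ hj₂]
    apply Multiplicative.toAdd.injective
    simp [e]
  · rw [mul_inv_rev, mul_assoc c, (ht.zpow_left (-e)).eq]
    group

theorem eq_one_of_map_sig_succ_mul_inv_sig_eq_one (f : commutator (BraidGroup m) →* H)
    {k : ℕ} (hk : 3 ≤ k) (hkm : k + 1 ≤ m - 1)
    (hf : f ⟨sig m (k + 1) * (sig m k)⁻¹,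
      sig_mul_inv_sig_mem_commutator (by omega) hkm (by omega) (by omega)⟩ = 1)
    (y : commutator (BraidGroup m)) : f y = 1 := by
  set t := sig m (k + 1) * (sig m k)⁻¹
  have hσt : Commute (sig m 1) t := (sig_commute le_rfl (by omega) hkm).mul_right
    (sig_commute le_rfl (by omega) (by omega)).inv_right
  have hconj : Group.conjugatesOfSet {t} ⊆ f.ker.map (commutator (BraidGroup m)).subtype := by
    intro x hx
    obtain ⟨_, rfl, hx⟩ := Group.mem_conjugatesOfSet_iff.mp hx
    obtain ⟨c, rfl⟩ := isConj_iff.mp hx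
    obtain ⟨c', hc', hc't⟩ := exists_mem_commutator_conj_eq le_rfl (by omega) hσt c
    exact ⟨⟨c', hc'⟩ * _ * ⟨c', hc'⟩⁻¹, f.normal_ker.conj_mem _ hf _, hc't⟩
  obtain ⟨z, hz, hzy⟩ := ((commutator_le_normalClosure (by omega) hkm).trans
    ((Subgroup.closure_le _).mpr hconj)) y.2
  rwa [← Subtype.ext hzy]

end BraidGroup

open BraidGroup

theorem qR_mod_Z_nontrivial_quotient_general (n : ℕ) (hn : 8 ≤ n) {G : Type*} [Group G]
    (q : ↥(commutator (BraidGroup n)) →* G) (hq : Function.Surjective q)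
    (hG : Nontrivial G)
    (ι : BraidGroup (n - 3) →* BraidGroup n)
    (hι : ∀ i : ℕ, 1 ≤ i → i ≤ n - 4 → ι (sig (n - 3) i) = sig n (i + 3))
    (hc : ∀ x ∈ commutator (BraidGroup (n - 3)), ι x ∈ commutator (BraidGroup n))
    (a : ↥(commutator (BraidGroup n)))
    (φ : ↥(commutator (BraidGroup (n - 3))) →* G)
    (hφ : φ = q.comp (((ι.domRestrict (commutator (BraidGroup (n - 3)))).codRestrict
        (commutator (BraidGroup n)) (fun x => hc x x.2)))) :
    (∀ g ∈ φ.range, ∃ x, φ x = g) ∧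
    ∃ g ∈ φ.range, g ∉ φ.range ⊓ Subgroup.zpowers (q a) := by
  refine ⟨fun g hg => hg, ?_⟩
  by_contra! hZ
  have hφ1 : ∀ x, φ x = 1 := by
    have := isPerfect_commutator (m := n - 3) (by omega)
    refine Group.IsPerfect.apply_eq_one_of_commute φ fun x y => ?_
    obtain ⟨i, hi⟩ := Subgroup.mem_zpowers_iff.mp (hZ _ ⟨x, rfl⟩).2
    obtain ⟨j, hj⟩ := Subgroup.mem_zpowers_iff.mp (hZ _ ⟨y, rfl⟩).2
    rw [← hi, ← hj]
    exact Commute.zpow_zpow_self _ _ _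
  have hσ : q ⟨sig n (4 + 1) * (sig n 4)⁻¹,
      sig_mul_inv_sig_mem_commutator (by omega) (by omega) (by omega) (by omega)⟩ = 1 := by
    have h := hφ1 ⟨sig (n - 3) 2 * (sig (n - 3) 1)⁻¹,
      sig_mul_inv_sig_mem_commutator (by omega) (by omega) le_rfl (by omega)⟩
    rw [hφ, MonoidHom.comp_apply] at h
    convert h using 2
    apply Subtype.ext
    change _ = ι (sig (n - 3) 2 * (sig (n - 3) 1)⁻¹)
    rw [map_mul, map_inv, hι 2 (by omega) (by omega), hι 1 (by omega) (by omega)]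
  have hq1 : ∀ y, q y = 1 :=
    eq_one_of_map_sig_succ_mul_inv_sig_eq_one q (by norm_num) (by omega) hσ
  obtain ⟨u, v, huv⟩ := hG
  obtain ⟨x, rfl⟩ := hq u
  obtain ⟨y, rfl⟩ := hq v
  exact huv (by rw [hq1, hq1])

/-- For n ≥ 8: let `R ≅ B'_{n-3}` be the commutator subgroup of the braid group on the
rightmost n-3 strands, included in `B'_n` via `ι`, and let `φ : B'_{n-3} → G` be the
restriction of the nontrivial quotient `q`. With `Z` the intersection of `q(R) = φ.range`
with the cyclic subgroup generated by the image of σ₂σ₁⁻¹, the quotient `q(R)/Z` is a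
nontrivial quotient of `B'_{n-3}`: `φ` maps onto `q(R)`, and `q(R)` is not contained
in `Z`. -/
theorem qR_mod_Z_nontrivial_quotient (n : ℕ) (hn : 8 ≤ n) {G : Type*} [Group G]
    (q : ↥(commutator (BraidGroup n)) →* G) (hq : Function.Surjective q)
    (hG : Nontrivial G)
    (ι : BraidGroup (n - 3) →* BraidGroup n)
    (hι : ∀ i : ℕ, 1 ≤ i → i ≤ n - 4 → ι (sig (n - 3) i) = sig n (i + 3))
    (hc : ∀ x ∈ commutator (BraidGroup (n - 3)), ι x ∈ commutator (BraidGroup n))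
    (a : ↥(commutator (BraidGroup n)))
    (ha : (a : BraidGroup n) = sig n 2 * (sig n 1)⁻¹)
    (φ : ↥(commutator (BraidGroup (n - 3))) →* G)
    (hφ : φ = q.comp (((ι.domRestrict (commutator (BraidGroup (n - 3)))).codRestrict
        (commutator (BraidGroup n)) (fun x => hc x x.2)))) :
    (∀ g ∈ φ.range, ∃ x, φ x = g) ∧
    ∃ g ∈ φ.range, g ∉ φ.range ⊓ Subgroup.zpowers (q a) :=
  qR_mod_Z_nontrivial_quotient_general n hn q hq hG ι hι hc a φ hφ
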